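/- (Reduction to the Gorenstein case.) Let k be a field. Suppose that for every Artinian local k-algebra (R', 𝔪') whose socle {r ∈ R' : r·𝔪' = 0} is one-dimensional as a vector space over the residue field R'/𝔪' (i.e., R' is Gorenstein), the zero ideal of R' is arc-closed: (0)^ac = 0. Then the zero ideal of every Artinian local k-algebra is arc-closed. -/

import Mathlib

open PowerSeries

universe u

/-- A "based arc" on a local `k`-algebra `R` with coefficients in a commutative `k`-algebra `S`
is a `k`-algebra homomorphism `φ : R → S[[t]]` with `φ(𝔪) ⊆ (t)`.  The *arc closure* `𝔞^ac` of
an ideal `𝔞 ⊆ 𝔪` is the set of `f ∈ R` killed by every based arc that kills `𝔞`. -/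
def arcClosure (k R : Type u) [Field k] [CommRing R] [Algebra k R] [IsLocalRing R]
    (𝔞 : Ideal R) : Set R :=
  {f | ∀ (S : Type u) [CommRing S] [Algebra k S] (φ : R →ₐ[k] PowerSeries S),
    (∀ m ∈ IsLocalRing.maximalIdeal R, constantCoeff (φ m) = 0) →
    (∀ a ∈ 𝔞, φ a = 0) → φ f = 0}

/-!
Given `f ≠ 0` in the arc closure of `(0)`, choose by Zorn an ideal `I` maximal among those not
containing `f`. In `R ⧸ I` every nonzero ideal contains the image `g` of `f`, which forces the
socle to be `(g)`: for `m ∈ 𝔪`, `g ∈ (g m)` gives `g (1 - c m) = 0`, so `g m = 0`; and a nonzero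
socle element `r` has `g = c r` with `c` a unit. Thus `R ⧸ I` is Gorenstein, while `g` stays in
the arc closure of `(0)` because based arcs on `R ⧸ I` pull back to based arcs on `R`.
-/

theorem zero_mem_arcClosure (k R : Type u) [Field k] [CommRing R] [Algebra k R] [IsLocalRing R]
    (𝔞 : Ideal R) : (0 : R) ∈ arcClosure k R 𝔞 :=
  fun _ _ _ φ _ _ ↦ map_zero φ

theorem map_mem_arcClosure {k R R' : Type u} [Field k] [CommRing R] [Algebra k R]
    [IsLocalRing R] [CommRing R'] [Algebra k R'] [IsLocalRing R'] (π : R →ₐ[k] R')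
    [IsLocalHom π] {𝔞 : Ideal R} {f : R} (hf : f ∈ arcClosure k R 𝔞) :
    π f ∈ arcClosure k R' (𝔞.map π) :=
  fun S _ _ ψ hψ h𝔞 ↦ hf S (ψ.comp π)
    (fun m hm ↦ hψ _ (map_nonunit (π : R →+* R') m hm))
    (fun _ ha ↦ h𝔞 _ (Ideal.mem_map_of_mem π ha))

theorem Submodule.exists_le_maximal_notMem {R M : Type*} [Semiring R] [AddCommMonoid M]
    [Module R M] {f : M} {N : Submodule R M} (hf : f ∉ N) :
    ∃ I, N ≤ I ∧ Maximal (f ∉ ·) I := by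
  refine zorn_le_nonempty₀ {J | f ∉ J} (fun c hc hchain J hJ ↦ ?_) N hf
  refine ⟨sSup c, fun hmem ↦ ?_, fun _ ↦ le_sSup⟩
  obtain ⟨J', hJ'c, hfJ'⟩ := (Submodule.mem_sSup_of_directed ⟨J, hJ⟩ hchain.directedOn).1 hmem
  exact hc hJ'c hfJ'

theorem Ideal.Quotient.mk_mem_of_maximal_notMem {R : Type*} [CommRing R] {I : Ideal R} {f : R}
    (hI : Maximal (f ∉ ·) I) {J : Ideal (R ⧸ I)} (hJ : J ≠ ⊥) : Ideal.Quotient.mk I f ∈ J := by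
  by_contra hfJ
  have hle : I ≤ J.comap (Ideal.Quotient.mk I) := fun x hx ↦ by
    simp [Ideal.Quotient.eq_zero_iff_mem.2 hx]
  have hcomap : J.comap (Ideal.Quotient.mk I) ≤ I := hI.2 hfJ hle
  apply hJ
  rw [← Ideal.map_comap_of_surjective _ Ideal.Quotient.mk_surjective J,
    le_antisymm hcomap hle, Ideal.map_quotient_self]

section Socle

open IsLocalRing

variable {A : Type*} [CommRing A] [IsLocalRing A]

variable (A) in
def socle : Set A := {r | ∀ m ∈ maximalIdeal A, r * m = 0}

theorem mem_socle_of_forall_mem {g : A} (hess : ∀ J : Ideal A, J ≠ ⊥ → g ∈ J) :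
    g ∈ socle A := by
  intro m hm
  by_contra hgm
  obtain ⟨c, hc⟩ := Ideal.mem_span_singleton'.1 (hess _ (by simpa using hgm))
  have hunit : IsUnit (1 - c * m) :=
    isUnit_one_sub_self_of_mem_nonunits _ ((maximalIdeal A).mul_mem_left c hm)
  have hg : g = 0 := hunit.mul_left_eq_zero.1 (by linear_combination -hc)
  exact hgm (by simp [hg])

theorem socle_eq_span_of_forall_mem {g : A} (hg : g ≠ 0)
    (hess : ∀ J : Ideal A, J ≠ ⊥ → g ∈ J) : socle A = Ideal.span {g} := by
  have hgsoc := mem_socle_of_forall_mem hess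
  ext r
  constructor
  · intro hr
    rcases eq_or_ne r 0 with rfl | hr0
    · exact zero_mem _
    obtain ⟨c, rfl⟩ := Ideal.mem_span_singleton'.1 (hess _ (by simpa using hr0))
    have hc : IsUnit c := by
      by_contra hc
      exact hg (by rw [mul_comm]; exact hr c hc)
    exact Ideal.mem_span_singleton'.2 ⟨↑hc.unit⁻¹, by simp [← mul_assoc]⟩
  · intro hr m hm
    obtain ⟨a, rfl⟩ := Ideal.mem_span_singleton'.1 hr
    rw [mul_assoc, hgsoc m hm, mul_zero]

end Socle

/-- Reduction to the Gorenstein case: if the zero ideal of every Gorenstein Artinian local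
`k`-algebra (one whose socle is one-dimensional over the residue field, i.e. is generated by a
single nonzero element) is arc-closed, then the zero ideal of every Artinian local `k`-algebra
is arc-closed. -/
theorem arcClosure_bot_of_gorenstein_case (k : Type u) [Field k]
    (hGor : ∀ (R' : Type u) [CommRing R'] [Algebra k R'] [IsLocalRing R'] [IsArtinianRing R'],
      (∃ g : R', g ≠ 0 ∧
        {r : R' | ∀ m ∈ IsLocalRing.maximalIdeal R', r * m = 0} = (Ideal.span {g} : Ideal R')) →
      arcClosure k R' ⊥ = {0})
    (R : Type u) [CommRing R] [Algebra k R] [IsLocalRing R] [IsArtinianRing R] :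
    arcClosure k R ⊥ = {0} := by
  refine Set.eq_singleton_iff_unique_mem.2 ⟨zero_mem_arcClosure k R ⊥, fun f hf ↦ ?_⟩
  by_contra hf0
  obtain ⟨I, -, hI⟩ := Submodule.exists_le_maximal_notMem (N := (⊥ : Ideal R)) (f := f) hf0
  have hg : Ideal.Quotient.mk I f ≠ 0 := fun h ↦ hI.1 (Ideal.Quotient.eq_zero_iff_mem.1 h)
  have : Nontrivial (R ⧸ I) := ⟨⟨_, _, hg⟩⟩
  have : IsLocalRing (R ⧸ I) := .of_surjective' _ Ideal.Quotient.mk_surjective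
  have : IsLocalHom (Ideal.Quotient.mkₐ k I) :=
    ⟨(IsLocalHom.of_surjective _ Ideal.Quotient.mk_surjective).map_nonunit⟩
  have hsoc := socle_eq_span_of_forall_mem hg fun _ ↦ Ideal.Quotient.mk_mem_of_maximal_notMem hI
  have hgarc := map_mem_arcClosure (Ideal.Quotient.mkₐ k I) hf
  rw [Ideal.map_bot, hGor (R ⧸ I) ⟨_, hg, hsoc⟩] at hgarc
  exact hg hgarc
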